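/- arXiv:2011.01929 — 4 statements merged into one kernel-verified Lean document; each statement's English description precedes it below -/
import Mathlib

section
/- Let A ∈ ℝ^{m×n}, b ∈ ℝⁿ, and ε ≥ 0. Then exactly one of the following two statements holds: (1) there exists x ∈ ℝⁿ with Ax ≤ 0 and ⟪b, x⟫ > ε‖x‖; (2) there exists y ∈ ℝᵐ with y ≥ 0 and ‖Aᵀy - b‖ ≤ ε. (Generalization of Farkas' lemma; for ε = 0 this recovers the usual Farkas lemma.) -/
/-!
The nonnegative combinations of the rows of `A` form a closed convex cone `K`: by Carathéodory's
theorem for cones, every point of `K` lies in the subcone spanned by some linearly independent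
rows, and such a subcone is the image of the closed orthant under an injective linear map.
If `b` is at distance more than `ε` from `K`, decompose `b = p + x` with `p` the projection of `b`
onto `K` (Moreau decomposition): `x` lies in the polar cone, i.e. `A x ≤ 0`, and
`⟪b, x⟫ = ‖x‖² > ε ‖x‖`. Conversely, `A x ≤ 0` and `‖Aᵀ y - b‖ ≤ ε` give
`⟪b, x⟫ = ⟪Aᵀ y, x⟫ + ⟪b - Aᵀ y, x⟫ ≤ ε ‖x‖` by Cauchy–Schwarz.
-/

open RealInnerProductSpace Matrix Finset

section ConicHull

variable {𝕜 ι ι' M : Type*} [Field 𝕜] [LinearOrder 𝕜] [IsStrictOrderedRing 𝕜]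
  [AddCommGroup M] [Module 𝕜 M] [Fintype ι]

variable (𝕜) in
def conicHull (v : ι → M) : PointedCone 𝕜 M :=
  (PointedCone.positive 𝕜 (ι → 𝕜)).map (Fintype.linearCombination 𝕜 v)

lemma mem_conicHull {v : ι → M} {x : M} :
    x ∈ conicHull 𝕜 v ↔ ∃ c : ι → 𝕜, 0 ≤ c ∧ ∑ i, c i • v i = x := by
  simp [conicHull, Fintype.linearCombination_apply]

lemma mem_conicHull_self (v : ι → M) (i : ι) : v i ∈ conicHull 𝕜 v := by
  classical
  exact mem_conicHull.2 ⟨Pi.single i 1, Pi.single_nonneg.2 zero_le_one, by simp [Pi.single_apply]⟩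

lemma conicHull_le {v : ι → M} {C : PointedCone 𝕜 M} (h : ∀ i, v i ∈ C) : conicHull 𝕜 v ≤ C := by
  intro x hx
  obtain ⟨c, hc, rfl⟩ := mem_conicHull.1 hx
  exact sum_mem fun i _ => C.smul_mem (hc i) (h i)

lemma conicHull_comp_le [Fintype ι'] (v : ι → M) (f : ι' → ι) :
    conicHull 𝕜 (v ∘ f) ≤ conicHull 𝕜 v :=
  conicHull_le fun j => mem_conicHull_self v (f j)

/-- Carathéodory's reduction step: move from `c` along the dependence `d` until a first
coefficient vanishes. -/
lemma exists_nonneg_combination_card_lt {v : ι → M} {c d : ι → 𝕜} (hc : 0 ≤ c)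
    (hd : ∑ i, d i • v i = 0) (hdc : ∀ i, c i = 0 → d i = 0) {j : ι} (hj : 0 < d j) :
    ∃ c' : ι → 𝕜, 0 ≤ c' ∧ ∑ i, c' i • v i = ∑ i, c i • v i ∧
      #{i | c' i ≠ 0} < #{i | c i ≠ 0} := by
  classical
  obtain ⟨i₀, hi₀, hmin⟩ :=
    exists_min_image {i | 0 < d i} (fun i => c i / d i) ⟨j, (mem_filter_univ j).2 hj⟩
  rw [mem_filter_univ] at hi₀
  set t := c i₀ / d i₀
  have ht : 0 ≤ t := div_nonneg (hc i₀) hi₀.le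
  refine ⟨c - t • d, fun i => ?_, ?_, card_lt_card ?_⟩
  · rcases lt_or_ge 0 (d i) with hdi | hdi
    · have := hmin i ((mem_filter_univ i).2 hdi)
      rw [le_div_iff₀ hdi] at this
      simpa using this
    · simpa using mul_nonpos_of_nonneg_of_nonpos ht hdi |>.trans (hc i)
  · simp [sub_smul, mul_smul, sum_sub_distrib, ← smul_sum, hd]
  · refine ssubset_iff_of_subset (monotone_filter_right _ fun i _ hi hci => hi ?_) |>.2 ⟨i₀, ?_, ?_⟩
    · simpa using fun h => hi₀.ne' (hdc i₀ h)
    · simp [t, div_mul_cancel₀ _ hi₀.ne']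
    · simp [hci, hdc i hci]

/-- Carathéodory's theorem for cones. -/
theorem exists_linearIndepOn_of_mem_conicHull {v : ι → M} {x : M} (hx : x ∈ conicHull 𝕜 v) :
    ∃ s : Finset ι, LinearIndepOn 𝕜 v s ∧ x ∈ conicHull 𝕜 (fun i : s => v i) := by
  classical
  obtain ⟨c, ⟨hc, hcx⟩, hmin⟩ :=
    (measure fun c : ι → 𝕜 => #{i | c i ≠ 0}).wf.has_min {c | 0 ≤ c ∧ ∑ i, c i • v i = x}
      (mem_conicHull.1 hx)
  refine ⟨({i | c i ≠ 0} : Finset ι), ?_, mem_conicHull.2 ⟨fun i => c i, fun i => hc i, ?_⟩⟩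
  · by_contra hdep
    obtain ⟨g, hg, j, hj, hgj⟩ := not_linearIndepOn_finset_iff.1 hdep
    set d : ι → 𝕜 := fun i => if c i ≠ 0 then g i else 0
    have hd : ∑ i, d i • v i = 0 := by simpa [d, ite_smul, sum_filter] using hg
    have hdc : ∀ i, c i = 0 → d i = 0 := by simp +contextual [d]
    have hdj : d j = g j := if_pos ((mem_filter_univ j).1 hj)
    obtain ⟨c', hc', hc'x, hlt⟩ := hgj.lt_or_gt.elim
      (fun hneg => exists_nonneg_combination_card_lt hc (d := -d) (by simp [neg_smul, hd])
        (by simpa using hdc) (j := j) (by simpa [hdj] using hneg))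
      (fun hpos => exists_nonneg_combination_card_lt hc hd hdc (hdj ▸ hpos))
    exact hmin c' ⟨hc', hc'x.trans hcx⟩ hlt
  · rw [sum_coe_sort _ fun i => c i • v i, sum_filter_of_ne fun _ _ => left_ne_zero_of_smul, hcx]

end ConicHull

section Closed

variable {ι E : Type*} [Fintype ι] [AddCommGroup E] [TopologicalSpace E] [IsTopologicalAddGroup E]
  [Module ℝ E] [ContinuousSMul ℝ E] [T2Space E]

theorem LinearIndependent.isClosed_conicHull {v : ι → E} (hv : LinearIndependent ℝ v) :
    IsClosed (conicHull ℝ v : Set E) :=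
  (LinearMap.isClosedEmbedding_of_injective (LinearMap.ker_eq_bot.2
    (linearIndependent_iff_injective_fintypeLinearCombination.1 hv))).isClosedMap _ isClosed_Ici

theorem isClosed_conicHull (v : ι → E) : IsClosed (conicHull ℝ v : Set E) := by
  classical
  have hunion : (conicHull ℝ v : Set E) =
      ⋃ (s : Finset ι) (_ : LinearIndepOn ℝ v s), conicHull ℝ (fun i : s => v i) := by
    refine subset_antisymm (fun x hx => ?_) (Set.iUnion₂_subset fun s _ => conicHull_comp_le v _)
    obtain ⟨s, hs, hxs⟩ := exists_linearIndepOn_of_mem_conicHull hx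
    exact Set.mem_iUnion₂.2 ⟨s, hs, hxs⟩
  rw [hunion]
  exact isClosed_iUnion_of_finite fun s => isClosed_iUnion_of_finite fun hs => hs.isClosed_conicHull

end Closed

section InnerProduct

variable {F : Type*} [NormedAddCommGroup F] [InnerProductSpace ℝ F]

theorem PointedCone.exists_moreau_decomposition (K : PointedCone ℝ F) (hK : IsComplete (K : Set F))
    (b : F) : ∃ p ∈ K, (∀ w ∈ K, ⟪b - p, w⟫ ≤ 0) ∧ ⟪b - p, p⟫ = 0 := by
  obtain ⟨p, hp, hproj⟩ := exists_norm_eq_iInf_of_complete_convex ⟨0, K.zero_mem⟩ hK K.convex b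
  have hvar := (norm_eq_iInf_iff_real_inner_le_zero K.convex hp).1 hproj
  have hpolar : ∀ w ∈ K, ⟪b - p, w⟫ ≤ 0 := fun w hw => by
    simpa using hvar (p + w) (K.add_mem hp hw)
  refine ⟨p, hp, hpolar, le_antisymm (hpolar p hp) ?_⟩
  simpa using hvar 0 K.zero_mem

lemma inner_le_mul_norm_of_norm_sub_le {w b x : F} {ε : ℝ} (hwx : ⟪w, x⟫ ≤ 0)
    (hwb : ‖w - b‖ ≤ ε) : ⟪b, x⟫ ≤ ε * ‖x‖ :=
  calc ⟪b, x⟫ = ⟪w, x⟫ + ⟪b - w, x⟫ := by rw [inner_sub_left]; ring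
    _ ≤ ‖b - w‖ * ‖x‖ := by linarith [real_inner_le_norm (b - w) x]
    _ ≤ ε * ‖x‖ := by rw [norm_sub_rev]; gcongr

lemma inner_sum_smul_nonpos {ι : Type*} [Fintype ι] {v : ι → F} {x : F} {y : ι → ℝ}
    (hv : ∀ i, ⟪v i, x⟫ ≤ 0) (hy : ∀ i, 0 ≤ y i) : ⟪∑ i, y i • v i, x⟫ ≤ 0 := by
  rw [sum_inner]
  exact sum_nonpos fun i _ => by
    rw [real_inner_smul_left]; exact mul_nonpos_of_nonneg_of_nonpos (hy i) (hv i)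

theorem approximate_farkas [CompleteSpace F] {ι : Type*} [Fintype ι] (v : ι → F) (b : F) {ε : ℝ}
    (hε : 0 ≤ ε) :
    Xor (∃ x : F, (∀ i, ⟪v i, x⟫ ≤ 0) ∧ ⟪b, x⟫ > ε * ‖x‖)
      (∃ y : ι → ℝ, (∀ i, 0 ≤ y i) ∧ ‖∑ i, y i • v i - b‖ ≤ ε) := by
  rw [xor_iff_or_and_not_and]
  refine ⟨or_iff_not_imp_right.2 fun hfar => ?_, ?_⟩
  · obtain ⟨p, hp, hpolar, hperp⟩ :=
      (conicHull ℝ v).exists_moreau_decomposition (isClosed_conicHull v).isComplete b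
    have hεx : ε < ‖b - p‖ := by
      obtain ⟨y, hy, rfl⟩ := mem_conicHull.1 hp
      rw [norm_sub_rev]
      exact lt_of_not_ge fun h => hfar ⟨y, hy, h⟩
    refine ⟨b - p, fun i => real_inner_comm (v i) _ ▸ hpolar _ (mem_conicHull_self v i), ?_⟩
    calc ε * ‖b - p‖ < ‖b - p‖ * ‖b - p‖ := by gcongr; exact hε.trans_lt hεx
      _ = ⟪b, b - p⟫ := by
        rw [← real_inner_self_eq_norm_mul_norm, inner_sub_left, real_inner_comm (b - p) p, hperp,
          sub_zero]
  · rintro ⟨⟨x, hvx, hbx⟩, y, hy, hyb⟩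
    exact (inner_le_mul_norm_of_norm_sub_le (inner_sum_smul_nonpos hvx hy) hyb).not_gt hbx

end InnerProduct

lemma toLp_transpose_mulVec {m n : Type*} [Fintype m] (A : Matrix m n ℝ) (y : m → ℝ) :
    WithLp.toLp 2 (Aᵀ *ᵥ y) = ∑ i, y i • (WithLp.toLp 2 (A i) : EuclideanSpace ℝ n) := by
  simp [mulVec_transpose, vecMul_eq_sum]

lemma mulVec_apply_eq_inner {m n : Type*} [Fintype n] (A : Matrix m n ℝ)
    (x : EuclideanSpace ℝ n) (i : m) :
    (A *ᵥ x) i = ⟪(WithLp.toLp 2 (A i) : EuclideanSpace ℝ n), x⟫ := by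
  simp [mulVec, EuclideanSpace.inner_eq_star_dotProduct, dotProduct_comm]

theorem stmt1 (m n : ℕ) (A : Matrix (Fin m) (Fin n) ℝ)
    (b : EuclideanSpace ℝ (Fin n)) (ε : ℝ) (hε : 0 ≤ ε) :
    Xor'
      (∃ x : EuclideanSpace ℝ (Fin n), (∀ i, A.mulVec x i ≤ 0) ∧ ⟪b, x⟫ > ε * ‖x‖)
      (∃ y : Fin m → ℝ, (∀ i, 0 ≤ y i) ∧
        ‖(show EuclideanSpace ℝ (Fin n) from WithLp.toLp 2 (Aᵀ.mulVec y)) - b‖ ≤ ε) := by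
  simp only [mulVec_apply_eq_inner, toLp_transpose_mulVec]
  exact approximate_farkas _ b hε
end

section
/- Let D = {x ∈ ℝⁿ : Ax ≤ b} be a non-empty bounded polytope, f : ℝⁿ → ℝ continuously differentiable, η > 0, ε' > 0, and ε = η·ε'. Suppose x ∈ D is an ε'-KKT point, i.e., there exists μ ∈ ℝᵐ with μ ≥ 0, ⟪μ, Ax - b⟫ = 0, and ‖∇f(x) + Aᵀμ‖ ≤ ε'. Then, letting y = Π_D(x - η∇f(x)), we have ‖x - y‖ ≤ ε. -/
/-!
Testing the projection inequality for `y = Π_D(x - η∇f(x))` at the feasible point `x` gives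
`‖x - y‖² ≤ η⟪∇f(x), x - y⟫`. Complementary slackness and feasibility of `y` make
`⟪Aᵀμ, x - y⟫ = μ ⬝ (Ax - b) - μ ⬝ (Ay - b)` nonnegative, so the right side is at most
`η⟪∇f(x) + Aᵀμ, x - y⟫ ≤ ηε'‖x - y‖`; divide by `‖x - y‖`.
-/

open RealInnerProductSpace Matrix

section Polyhedron

variable {ι κ : Type*} [Fintype κ]

theorem convex_setOf_mulVec_le (A : Matrix ι κ ℝ) (b : ι → ℝ) :
    Convex ℝ {x : EuclideanSpace ℝ κ | ∀ i, (A *ᵥ x) i ≤ b i} :=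
  (convex_Iic b).linear_preimage
    ((mulVecLin A).comp (WithLp.linearEquiv 2 ℝ (κ → ℝ)).toLinearMap)

variable [Fintype ι]

theorem inner_toLp_transpose_mulVec (A : Matrix ι κ ℝ) (μ : ι → ℝ)
    (w : EuclideanSpace ℝ κ) :
    ⟪(WithLp.toLp 2 (Aᵀ *ᵥ μ) : EuclideanSpace ℝ κ), w⟫ = μ ⬝ᵥ A *ᵥ w := by
  rw [EuclideanSpace.inner_toLp_toLp, star_trivial, dotProduct_comm, mulVec_transpose,
    dotProduct_mulVec]

theorem dotProduct_mulVec_sub_nonneg {A : Matrix ι κ ℝ} {b μ : ι → ℝ} {x y : κ → ℝ}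
    (hμ : ∀ i, 0 ≤ μ i) (hcomp : μ ⬝ᵥ (A *ᵥ x - b) = 0)
    (hy : ∀ i, (A *ᵥ y) i ≤ b i) :
    0 ≤ μ ⬝ᵥ A *ᵥ (x - y) := by
  have hsplit : A *ᵥ (x - y) = (A *ᵥ x - b) + (b - A *ᵥ y) := by
    rw [mulVec_sub]; abel
  rw [hsplit, dotProduct_add, hcomp, zero_add]
  exact Finset.sum_nonneg fun i _ => mul_nonneg (hμ i) (sub_nonneg.mpr (hy i))

end Polyhedron

section ProjectedGradient

variable {F : Type*} [NormedAddCommGroup F] [InnerProductSpace ℝ F]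

theorem real_inner_sub_le_zero_of_forall_norm_sub_le {K : Set F} (hK : Convex ℝ K) {u y : F}
    (hy : y ∈ K) (hmin : ∀ z ∈ K, ‖u - y‖ ≤ ‖u - z‖) {z : F} (hz : z ∈ K) :
    ⟪u - y, z - y⟫ ≤ 0 := by
  have : Nonempty K := ⟨⟨y, hy⟩⟩
  have hbdd : BddBelow (Set.range fun w : K => ‖u - w‖) :=
    ⟨0, by rintro _ ⟨w, rfl⟩; exact norm_nonneg _⟩
  refine (norm_eq_iInf_iff_real_inner_le_zero hK hy).mp ?_ z hz
  exact le_antisymm (le_ciInf fun w => hmin w w.2) (ciInf_le hbdd ⟨y, hy⟩)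

theorem norm_sub_le_of_real_inner_le_zero {x y g v : F} {η ε' : ℝ} (hη : 0 ≤ η)
    (hvar : ⟪x - η • g - y, x - y⟫ ≤ 0) (hv : 0 ≤ ⟪v, x - y⟫)
    (hgv : ‖g + v‖ ≤ ε') :
    ‖x - y‖ ≤ η * ε' := by
  have hε' : 0 ≤ ε' := (norm_nonneg _).trans hgv
  have hsq : ‖x - y‖ * ‖x - y‖ ≤ η * ε' * ‖x - y‖ :=
    calc ‖x - y‖ * ‖x - y‖ = ⟪x - y, x - y⟫ := (real_inner_self_eq_norm_mul_norm _).symm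
      _ ≤ η * ⟪g, x - y⟫ := by
        rw [sub_right_comm, inner_sub_left, real_inner_smul_left] at hvar
        linarith
      _ ≤ η * ⟪g + v, x - y⟫ := by
        rw [inner_add_left]
        gcongr
        linarith
      _ ≤ η * (ε' * ‖x - y‖) := by
        gcongr
        exact (real_inner_le_norm _ _).trans (by gcongr)
      _ = η * ε' * ‖x - y‖ := by ring
  rcases (norm_nonneg (x - y)).eq_or_lt with h0 | hpos
  · rw [← h0]; positivity
  · exact le_of_mul_le_mul_right hsq hpos

end ProjectedGradient

theorem stmt5_general (m n : ℕ) (A : Matrix (Fin m) (Fin n) ℝ) (b : Fin m → ℝ)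
    (D : Set (EuclideanSpace ℝ (Fin n)))
    (hD : D = {x : EuclideanSpace ℝ (Fin n) | ∀ i, A.mulVec x i ≤ b i})
    (f' : EuclideanSpace ℝ (Fin n) → EuclideanSpace ℝ (Fin n))
    (η ε' ε : ℝ) (hη : 0 < η) (hε : ε = η * ε')
    (x : EuclideanSpace ℝ (Fin n)) (hx : x ∈ D)
    (μ : Fin m → ℝ) (hμ : ∀ i, 0 ≤ μ i)
    (hcomp : μ ⬝ᵥ (A.mulVec x - b) = 0)
    (hkkt : ‖f' x + (show EuclideanSpace ℝ (Fin n) from WithLp.toLp 2 (Aᵀ.mulVec μ))‖ ≤ ε')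
    (y : EuclideanSpace ℝ (Fin n)) (hy : y ∈ D)
    (hproj : ∀ z ∈ D, ‖(x - η • f' x) - y‖ ≤ ‖(x - η • f' x) - z‖) :
    ‖x - y‖ ≤ ε := by
  subst hD
  have hvar :=
    real_inner_sub_le_zero_of_forall_norm_sub_le (convex_setOf_mulVec_le A b) hy hproj hx
  have hmult : 0 ≤ ⟪(WithLp.toLp 2 (Aᵀ *ᵥ μ) : EuclideanSpace ℝ (Fin n)), x - y⟫ := by
    rw [inner_toLp_transpose_mulVec, WithLp.ofLp_sub]
    exact dotProduct_mulVec_sub_nonneg hμ hcomp hy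
  exact hε ▸ norm_sub_le_of_real_inner_le_zero hη.le hvar hmult hkkt

theorem stmt5 (m n : ℕ) (A : Matrix (Fin m) (Fin n) ℝ) (b : Fin m → ℝ)
    (D : Set (EuclideanSpace ℝ (Fin n)))
    (hD : D = {x : EuclideanSpace ℝ (Fin n) | ∀ i, A.mulVec x i ≤ b i})
    (hne : D.Nonempty) (hbdd : Bornology.IsBounded D)
    (f : EuclideanSpace ℝ (Fin n) → ℝ)
    (f' : EuclideanSpace ℝ (Fin n) → EuclideanSpace ℝ (Fin n))
    (hf : ∀ z, HasGradientAt f (f' z) z) (hf'c : Continuous f')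
    (η ε' ε : ℝ) (hη : 0 < η) (hε' : 0 < ε') (hε : ε = η * ε')
    (x : EuclideanSpace ℝ (Fin n)) (hx : x ∈ D)
    (μ : Fin m → ℝ) (hμ : ∀ i, 0 ≤ μ i)
    (hcomp : μ ⬝ᵥ (A.mulVec x - b) = 0)
    (hkkt : ‖f' x + (show EuclideanSpace ℝ (Fin n) from WithLp.toLp 2 (Aᵀ.mulVec μ))‖ ≤ ε')
    (y : EuclideanSpace ℝ (Fin n)) (hy : y ∈ D)
    (hproj : ∀ z ∈ D, ‖(x - η • f' x) - y‖ ≤ ‖(x - η • f' x) - z‖) :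
    ‖x - y‖ ≤ ε :=
  stmt5_general m n A b D hD f' η ε' ε hη hε x hx μ hμ hcomp hkkt y hy hproj
end

section
/- Let D ⊆ ℝⁿ be non-empty, closed and convex, f : ℝⁿ → ℝ continuously differentiable with ∇f L-Lipschitz on D (L > 0), let η = 1/L and let x ∈ D with y = Π_D(x - η∇f(x)). If f(y) ≥ f(x) - ε' where ε' = ε²/(8L), then ‖x - y‖ ≤ ε/(2L). -/
/-!
The variational inequality of the projection, `⟪x - η ∇f(x) - y, x - y⟫ ≤ 0`, gives
`⟪∇f(x), x - y⟫ ≥ L ‖x - y‖²`; combined with the descent lemma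
`f y ≤ f x + ⟪∇f(x), y - x⟫ + (L/2) ‖y - x‖²` this yields the sufficient decrease
`f y ≤ f x - (L/2) ‖x - y‖²`. Hence `(L/2) ‖x - y‖² ≤ ε' = ε² / (8L)`.
The descent lemma only needs the Lipschitz bound along the segment `[x, y] ⊆ D`: there
`t ↦ f (x + t (y - x)) - t ⟪∇f(x), y - x⟫ - (L/2) t² ‖y - x‖²` has nonpositive derivative.
-/

open RealInnerProductSpace

section

variable {E : Type*} [NormedAddCommGroup E] [InnerProductSpace ℝ E]

theorem Convex.inner_sub_nonpos_of_forall_norm_sub_le {K : Set E} (hK : Convex ℝ K) {p y : E}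
    (hy : y ∈ K) (hmin : ∀ z ∈ K, ‖p - y‖ ≤ ‖p - z‖) : ∀ z ∈ K, ⟪p - y, z - y⟫ ≤ 0 := by
  have : Nonempty K := ⟨⟨y, hy⟩⟩
  refine (norm_eq_iInf_iff_real_inner_le_zero hK hy).mp (le_antisymm ?_ ?_)
  · exact le_ciInf fun z => hmin z z.2
  · exact ciInf_le ⟨0, Set.forall_mem_range.2 fun _ => norm_nonneg _⟩ (⟨y, hy⟩ : K)

theorem sq_norm_sub_le_mul_inner_of_inner_sub_smul_sub_nonpos {x y v : E} {η : ℝ}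
    (h : ⟪x - η • v - y, x - y⟫ ≤ 0) : ‖x - y‖ ^ 2 ≤ η * ⟪v, x - y⟫ := by
  have hexpand : ⟪x - η • v - y, x - y⟫ = ‖x - y‖ ^ 2 - η * ⟪v, x - y⟫ := by
    rw [sub_right_comm, inner_sub_left, real_inner_smul_left, real_inner_self_eq_norm_sq]
  linarith

variable [CompleteSpace E]

theorem HasGradientAt.hasDerivAt_comp_add_smul {f : E → ℝ} {f' x v : E} {t : ℝ}
    (h : HasGradientAt f f' (x + t • v)) :
    HasDerivAt (fun s : ℝ => f (x + s • v)) ⟪f', v⟫ t := by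
  have hline : HasDerivAt (fun s : ℝ => x + s • v) v t := by
    simpa using ((hasDerivAt_id t).smul_const v).const_add x
  simpa [Function.comp_def] using h.hasFDerivAt.comp_hasDerivAt t hline

theorem Convex.apply_le_apply_add_inner_add_sq {D : Set E} (hD : Convex ℝ D) {f : E → ℝ}
    {f' : E → E} (hf : ∀ z ∈ D, HasGradientAt f (f' z) z) {L : ℝ}
    (hLip : ∀ u ∈ D, ∀ v ∈ D, ‖f' u - f' v‖ ≤ L * ‖u - v‖) {x y : E} (hx : x ∈ D) (hy : y ∈ D) :
    f y ≤ f x + ⟪f' x, y - x⟫ + L / 2 * ‖y - x‖ ^ 2 := by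
  set g := y - x
  let φ : ℝ → ℝ := fun t => f (x + t • g) - t * ⟪f' x, g⟫ - L / 2 * t ^ 2 * ‖g‖ ^ 2
  have hφ : ∀ t ∈ Set.Icc (0 : ℝ) 1,
      HasDerivAt φ (⟪f' (x + t • g), g⟫ - ⟪f' x, g⟫ - L * t * ‖g‖ ^ 2) t := by
    intro t ht
    have h := (hf _ (hD.add_smul_sub_mem hx hy ht)).hasDerivAt_comp_add_smul
    exact ((h.sub ((hasDerivAt_id t).mul_const ⟪f' x, g⟫)).sub
      (((hasDerivAt_pow 2 t).const_mul (L / 2)).mul_const (‖g‖ ^ 2))).congr_deriv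
        (by simp only [one_mul, Nat.cast_ofNat, Nat.add_one_sub_one, pow_one]; ring)
  have hφ'_nonpos : ∀ t ∈ Set.Icc (0 : ℝ) 1,
      ⟪f' (x + t • g), g⟫ - ⟪f' x, g⟫ - L * t * ‖g‖ ^ 2 ≤ 0 := by
    intro t ht
    have hLipt : ‖f' (x + t • g) - f' x‖ ≤ L * (t * ‖g‖) := by
      simpa [norm_smul, abs_of_nonneg ht.1] using hLip _ (hD.add_smul_sub_mem hx hy ht) _ hx
    calc ⟪f' (x + t • g), g⟫ - ⟪f' x, g⟫ - L * t * ‖g‖ ^ 2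
        = ⟪f' (x + t • g) - f' x, g⟫ - L * t * ‖g‖ ^ 2 := by rw [inner_sub_left]
      _ ≤ ‖f' (x + t • g) - f' x‖ * ‖g‖ - L * t * ‖g‖ ^ 2 := by
          gcongr; exact real_inner_le_norm _ _
      _ ≤ L * (t * ‖g‖) * ‖g‖ - L * t * ‖g‖ ^ 2 := by gcongr
      _ = 0 := by ring
  have hanti : AntitoneOn φ (Set.Icc 0 1) :=
    antitoneOn_of_hasDerivWithinAt_nonpos (convex_Icc 0 1)
      (fun t ht => (hφ t ht).continuousAt.continuousWithinAt)
      (fun t ht => (hφ t (interior_subset ht)).hasDerivWithinAt)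
      (fun t ht => hφ'_nonpos t (interior_subset ht))
  have h01 : φ 1 ≤ φ 0 := hanti (by norm_num) (by norm_num) zero_le_one
  simp only [φ, g, one_smul, zero_smul, add_zero, add_sub_cancel] at h01
  linarith

theorem Convex.apply_le_sub_sq_norm_of_projected_gradient_step {D : Set E} (hD : Convex ℝ D)
    {f : E → ℝ} {f' : E → E} (hf : ∀ z ∈ D, HasGradientAt f (f' z) z) {L : ℝ} (hL : 0 < L)
    (hLip : ∀ u ∈ D, ∀ v ∈ D, ‖f' u - f' v‖ ≤ L * ‖u - v‖) {x y : E} (hx : x ∈ D) (hy : y ∈ D)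
    (hproj : ∀ z ∈ D, ‖x - (1 / L) • f' x - y‖ ≤ ‖x - (1 / L) • f' x - z‖) :
    f y ≤ f x - L / 2 * ‖x - y‖ ^ 2 := by
  have hstep : L * ‖x - y‖ ^ 2 ≤ ⟪f' x, x - y⟫ := by
    have := sq_norm_sub_le_mul_inner_of_inner_sub_smul_sub_nonpos
      (hD.inner_sub_nonpos_of_forall_norm_sub_le hy hproj x hx)
    rwa [← le_div_iff₀' hL, div_eq_inv_mul, ← one_div]
  have hdesc := hD.apply_le_apply_add_inner_add_sq hf hLip hx hy
  rw [← neg_sub x y, inner_neg_right, norm_neg] at hdesc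
  linarith

end

theorem stmt6_general (n : ℕ) (D : Set (EuclideanSpace ℝ (Fin n)))
    (hconv : Convex ℝ D)
    (f : EuclideanSpace ℝ (Fin n) → ℝ)
    (f' : EuclideanSpace ℝ (Fin n) → EuclideanSpace ℝ (Fin n))
    (hf : ∀ z, HasGradientAt f (f' z) z)
    (L : ℝ) (hL : 0 < L)
    (hLip : ∀ u ∈ D, ∀ v ∈ D, ‖f' u - f' v‖ ≤ L * ‖u - v‖)
    (η ε ε' : ℝ) (hη : η = 1 / L) (hεpos : 0 < ε) (hε' : ε' = ε ^ 2 / (8 * L))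
    (x : EuclideanSpace ℝ (Fin n)) (hx : x ∈ D)
    (y : EuclideanSpace ℝ (Fin n)) (hyD : y ∈ D)
    (hproj : ∀ z ∈ D, ‖(x - η • f' x) - y‖ ≤ ‖(x - η • f' x) - z‖)
    (hdec : f y ≥ f x - ε') :
    ‖x - y‖ ≤ ε / (2 * L) := by
  subst hη hε'
  have hdecrease :=
    hconv.apply_le_sub_sq_norm_of_projected_gradient_step (fun z _ => hf z) hL hLip hx hyD hproj
  have hsq : ‖x - y‖ ^ 2 ≤ (ε / (2 * L)) ^ 2 := by
    rw [div_pow, mul_pow, le_div_iff₀ (by positivity)]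
    have : L / 2 * ‖x - y‖ ^ 2 ≤ ε ^ 2 / (8 * L) := by linarith
    rw [le_div_iff₀ (by positivity)] at this
    nlinarith
  exact (pow_le_pow_iff_left₀ (norm_nonneg _) (by positivity) two_ne_zero).mp hsq

theorem stmt6 (n : ℕ) (D : Set (EuclideanSpace ℝ (Fin n))) (hne : D.Nonempty)
    (hcl : IsClosed D) (hconv : Convex ℝ D)
    (f : EuclideanSpace ℝ (Fin n) → ℝ)
    (f' : EuclideanSpace ℝ (Fin n) → EuclideanSpace ℝ (Fin n))
    (hf : ∀ z, HasGradientAt f (f' z) z) (hf'c : Continuous f')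
    (L : ℝ) (hL : 0 < L)
    (hLip : ∀ u ∈ D, ∀ v ∈ D, ‖f' u - f' v‖ ≤ L * ‖u - v‖)
    (η ε ε' : ℝ) (hη : η = 1 / L) (hεpos : 0 < ε) (hε' : ε' = ε ^ 2 / (8 * L))
    (x : EuclideanSpace ℝ (Fin n)) (hx : x ∈ D)
    (y : EuclideanSpace ℝ (Fin n)) (hyD : y ∈ D)
    (hproj : ∀ z ∈ D, ‖(x - η • f' x) - y‖ ≤ ‖(x - η • f' x) - z‖)
    (hdec : f y ≥ f x - ε') :
    ‖x - y‖ ≤ ε / (2 * L) :=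
  stmt6_general n D hconv f f' hf L hL hLip η ε ε' hη hεpos hε' x hx y hyD hproj hdec
end

section
/- Let D ⊆ ℝⁿ be non-empty, closed and convex, f : ℝⁿ → ℝ continuously differentiable, η > 0, x ∈ D and y = Π_D(x - η∇f(x)). If moreover ‖x - y‖ ≤ ε/(2L) (with L, ε > 0 and η = 1/L) and ‖∇f(x) - ∇f(y)‖ ≤ L‖x - y‖, then for all z ∈ D: ⟪-∇f(y), z - y⟫ ≤ ε‖z - y‖. -/
/-!
Optimality of the projection onto the convex set `D` gives `⟪x - η∇f(x) - y, z - y⟫ ≤ 0`, i.e.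
`⟪-∇f(x), z - y⟫ ≤ η⁻¹ ⟪y - x, z - y⟫ ≤ L ‖x - y‖ ‖z - y‖ ≤ (ε/2) ‖z - y‖`. Replacing `∇f(x)` by
`∇f(y)` costs `⟪∇f(x) - ∇f(y), z - y⟫ ≤ L ‖x - y‖ ‖z - y‖ ≤ (ε/2) ‖z - y‖` by Cauchy–Schwarz.
-/

open RealInnerProductSpace

section ProjectedGradient

variable {E : Type*} [NormedAddCommGroup E] [InnerProductSpace ℝ E] {D : Set E}

theorem real_inner_sub_nonpos_of_forall_norm_sub_le {p y : E} (hD : Convex ℝ D) (hy : y ∈ D)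
    (hmin : ∀ z ∈ D, ‖p - y‖ ≤ ‖p - z‖) : ∀ z ∈ D, ⟪p - y, z - y⟫ ≤ 0 := by
  rw [← norm_eq_iInf_iff_real_inner_le_zero hD hy]
  have : Nonempty D := ⟨⟨y, hy⟩⟩
  refine le_antisymm (le_ciInf fun z => hmin z z.2) ?_
  exact ciInf_le ⟨0, by rintro _ ⟨z, rfl⟩; positivity⟩ (⟨y, hy⟩ : D)

theorem real_inner_neg_le_of_projected_gradient_step {x y z g : E} {η : ℝ} (hD : Convex ℝ D)
    (hη : 0 < η) (hy : y ∈ D) (hproj : ∀ w ∈ D, ‖(x - η • g) - y‖ ≤ ‖(x - η • g) - w‖)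
    (hz : z ∈ D) : ⟪-g, z - y⟫ ≤ η⁻¹ * ‖x - y‖ * ‖z - y‖ := by
  have hopt := real_inner_sub_nonpos_of_forall_norm_sub_le hD hy hproj z hz
  have hsplit : ⟪(x - η • g) - y, z - y⟫ = η * ⟪-g, z - y⟫ - ⟪y - x, z - y⟫ := by
    rw [show (x - η • g) - y = η • -g - (y - x) by rw [smul_neg]; abel,
      inner_sub_left, real_inner_smul_left]
  have hcs : ⟪y - x, z - y⟫ ≤ ‖x - y‖ * ‖z - y‖ :=
    norm_sub_rev x y ▸ real_inner_le_norm _ _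
  rw [mul_assoc, le_inv_mul_iff₀ hη]
  linarith

end ProjectedGradient

theorem stmt7_general (n : ℕ) (D : Set (EuclideanSpace ℝ (Fin n)))
    (hconv : Convex ℝ D)
    (f' : EuclideanSpace ℝ (Fin n) → EuclideanSpace ℝ (Fin n))
    (L ε η : ℝ) (hL : 0 < L) (hη : η = 1 / L)
    (x : EuclideanSpace ℝ (Fin n))
    (y : EuclideanSpace ℝ (Fin n)) (hyD : y ∈ D)
    (hproj : ∀ z ∈ D, ‖(x - η • f' x) - y‖ ≤ ‖(x - η • f' x) - z‖)
    (hxy : ‖x - y‖ ≤ ε / (2 * L))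
    (hLipxy : ‖f' x - f' y‖ ≤ L * ‖x - y‖) :
    ∀ z ∈ D, ⟪-f' y, z - y⟫ ≤ ε * ‖z - y‖ := by
  subst hη
  intro z hz
  have hLxy : L * ‖x - y‖ ≤ ε / 2 := by
    rw [← le_div_iff₀' hL, div_div]; exact hxy
  have hstep : ⟪-f' x, z - y⟫ ≤ L * ‖x - y‖ * ‖z - y‖ := by
    simpa using
      real_inner_neg_le_of_projected_gradient_step hconv (by positivity) hyD hproj hz
  have hlip : ⟪f' x - f' y, z - y⟫ ≤ L * ‖x - y‖ * ‖z - y‖ :=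
    (real_inner_le_norm _ _).trans (by gcongr)
  calc ⟪-f' y, z - y⟫ = ⟪-f' x, z - y⟫ + ⟪f' x - f' y, z - y⟫ := by
        rw [← inner_add_left]; congr 1; abel
    _ ≤ (ε / 2 + ε / 2) * ‖z - y‖ := by nlinarith [norm_nonneg (z - y)]
    _ = ε * ‖z - y‖ := by ring

theorem stmt7 (n : ℕ) (D : Set (EuclideanSpace ℝ (Fin n))) (hne : D.Nonempty)
    (hcl : IsClosed D) (hconv : Convex ℝ D)
    (f : EuclideanSpace ℝ (Fin n) → ℝ)
    (f' : EuclideanSpace ℝ (Fin n) → EuclideanSpace ℝ (Fin n))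
    (hf : ∀ z, HasGradientAt f (f' z) z) (hf'c : Continuous f')
    (L ε η : ℝ) (hL : 0 < L) (hεpos : 0 < ε) (hη : η = 1 / L)
    (x : EuclideanSpace ℝ (Fin n)) (hx : x ∈ D)
    (y : EuclideanSpace ℝ (Fin n)) (hyD : y ∈ D)
    (hproj : ∀ z ∈ D, ‖(x - η • f' x) - y‖ ≤ ‖(x - η • f' x) - z‖)
    (hxy : ‖x - y‖ ≤ ε / (2 * L))
    (hLipxy : ‖f' x - f' y‖ ≤ L * ‖x - y‖) :
    ∀ z ∈ D, ⟪-f' y, z - y⟫ ≤ ε * ‖z - y‖ :=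
  stmt7_general n D hconv f' L ε η hL hη x y hyD hproj hxy hLipxy
end
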